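/- arXiv:2307.13155 — 2 statements merged into one kernel-verified Lean document; each statement's English description precedes it below -/
import Mathlib

section
/- Let G = (G_n, d_n) be a sequence of metric groups and let Γ be a finitely presented group. Then Γ is locally G-stable if and only if Γ is G-stable. -/
open Filter Matrix
open scoped ComplexOrder

noncomputable section

/-- The group of `k × k` complex unitary matrices. -/
abbrev UGp (k : ℕ) := Matrix.unitaryGroup (Fin k) ℂ

/-- The normalized Hilbert–Schmidt distance `‖A - B‖₂ = (τ_k((A-B)*(A-B)))^{1/2}`
on `k × k` complex matrices, where `τ_k` is the normalized trace. -/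
def hsDist (k : ℕ) (A B : Matrix (Fin k) (Fin k) ℂ) : ℝ :=
  Real.sqrt ((Matrix.trace ((A - B)ᴴ * (A - B))).re / k)

/-- The normalized trace `τ_k = (1/k)·Tr` on `k × k` complex matrices. -/
def nTrace (k : ℕ) (A : Matrix (Fin k) (Fin k) ℂ) : ℂ :=
  Matrix.trace A / k

/-- The normalized Hamming distance on the symmetric group `Sym(k)`. -/
def hammDist (k : ℕ) (σ τ : Equiv.Perm (Fin k)) : ℝ :=
  (Finset.univ.filter fun i => σ i ≠ τ i).card / k

/-- A sequence of maps `φ_n : Γ → G_n` is a partial homomorphism if for all `g, h ∈ Γ`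
there is `N` with `φ_n(gh) = φ_n(g)φ_n(h)` for all `n ≥ N`. -/
def IsPartialHom {Γ : Type*} [Group Γ] {G : ℕ → Type*} [∀ n, Group (G n)]
    (φ : ∀ n, Γ → G n) : Prop :=
  ∀ g h : Γ, ∃ N : ℕ, ∀ n ≥ N, φ n (g * h) = φ n g * φ n h

/-- An approximate homomorphism into the unitary groups `U(k_n)` with the
normalized Hilbert–Schmidt distance. -/
def IsApproxHomU {Γ : Type*} [Group Γ] (k : ℕ → ℕ)
    (φ : ∀ n, Γ → UGp (k n)) : Prop :=
  ∀ g h : Γ,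
    Tendsto (fun n => hsDist (k n) (φ n (g * h)) (φ n g * φ n h)) atTop (nhds 0)

/-- Two sequences of maps into the unitary groups `U(k_n)` are close if
`‖φ_n(g) - ψ_n(g)‖₂ → 0` for every `g`. -/
def CloseU {Γ : Type*} [Group Γ] (k : ℕ → ℕ) (φ ψ : ∀ n, Γ → UGp (k n)) : Prop :=
  ∀ g : Γ, Tendsto (fun n => hsDist (k n) (φ n g) (ψ n g)) atTop (nhds 0)

/-- A group is locally HS-stable if every approximate homomorphism into unitary
groups (with normalized Hilbert–Schmidt distance) is close to a partial homomorphism. -/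
def LocallyHSStable (Γ : Type*) [Group Γ] : Prop :=
  ∀ (k : ℕ → ℕ) (φ : ∀ n, Γ → UGp (k n)), IsApproxHomU k φ →
    ∃ ψ : ∀ n, Γ → UGp (k n), IsPartialHom ψ ∧ CloseU k φ ψ

/-- A group `Γ` is LEF if every finite subset `B ⊆ Γ` admits a map to a finite group
which is injective on `B` and multiplicative on `B`. -/
def IsLEF (Γ : Type*) [Group Γ] : Prop :=
  ∀ B : Finset Γ, ∃ (F : Type) (_ : Group F) (_ : Finite F) (φ : Γ → F),
    Set.InjOn φ ↑B ∧ ∀ g ∈ B, ∀ h ∈ B, φ (g * h) = φ g * φ h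

/-- A group is MAP if finite-dimensional unitary representations separate points. -/
def IsMAP (Γ : Type*) [Group Γ] : Prop :=
  ∀ g : Γ, g ≠ 1 → ∃ (k : ℕ) (π : Γ →* UGp k), π g ≠ 1

/-- A group is hyperlinear if it admits a separating approximate homomorphism into
the unitary groups with the normalized Hilbert–Schmidt distance. -/
def IsHyperlinear (Γ : Type*) [Group Γ] : Prop :=
  ∃ (k : ℕ → ℕ) (φ : ∀ n, Γ → UGp (k n)), IsApproxHomU k φ ∧
    ∀ g : Γ, g ≠ 1 → 0 < Filter.liminf (fun n => hsDist (k n) (φ n g) 1) atTop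

/-- The top-left `k × k` corner of an `m × m` matrix. -/
def corner {k m : ℕ} (h : k ≤ m) (A : Matrix (Fin m) (Fin m) ℂ) :
    Matrix (Fin k) (Fin k) ℂ :=
  A.submatrix (Fin.castLE h) (Fin.castLE h)

/-- Very flexible local HS-stability: every approximate homomorphism
`φ_n : Γ → U(k_n)` is close (in the corner sense) to a partial homomorphism
`ψ_n : Γ → U(m_n)` for some `m_n ≥ k_n`. -/
def VeryFlexiblyLocallyHSStable (Γ : Type*) [Group Γ] : Prop :=
  ∀ (k : ℕ → ℕ) (φ : ∀ n, Γ → UGp (k n)), IsApproxHomU k φ →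
    ∃ (m : ℕ → ℕ) (hm : ∀ n, k n ≤ m n) (ψ : ∀ n, Γ → UGp (m n)),
      IsPartialHom ψ ∧
      ∀ g : Γ, Tendsto (fun n => hsDist (k n) (φ n g) (corner (hm n) (ψ n g)))
        atTop (nhds 0)

/-- Flexible local HS-stability: as in the very flexible version, but requiring
`m_n / k_n → 1`. -/
def FlexiblyLocallyHSStable (Γ : Type*) [Group Γ] : Prop :=
  ∀ (k : ℕ → ℕ) (φ : ∀ n, Γ → UGp (k n)), IsApproxHomU k φ →
    ∃ (m : ℕ → ℕ) (hm : ∀ n, k n ≤ m n),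
      Tendsto (fun n => (m n : ℝ) / k n) atTop (nhds 1) ∧
      ∃ ψ : ∀ n, Γ → UGp (m n), IsPartialHom ψ ∧
        ∀ g : Γ, Tendsto (fun n => hsDist (k n) (φ n g) (corner (hm n) (ψ n g)))
          atTop (nhds 0)

/-- A hyperlinear approximation: an approximate homomorphism into unitary groups
with `‖φ_n(g) - 1‖₂ → √2` for every `g ≠ e`. -/
def IsHyperlinearApprox {Γ : Type*} [Group Γ] (k : ℕ → ℕ)
    (φ : ∀ n, Γ → UGp (k n)) : Prop :=
  IsApproxHomU k φ ∧
    ∀ g : Γ, g ≠ 1 →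
      Tendsto (fun n => hsDist (k n) (φ n g) 1) atTop (nhds (Real.sqrt 2))

/-- Weak HS-stability: every hyperlinear approximation is close to a sequence of
genuine homomorphisms. -/
def WeaklyHSStable (Γ : Type*) [Group Γ] : Prop :=
  ∀ (k : ℕ → ℕ) (φ : ∀ n, Γ → UGp (k n)), IsHyperlinearApprox k φ →
    ∃ ψ : ∀ n, Γ →* UGp (k n), CloseU k φ (fun n g => ψ n g)

/-- Weak local HS-stability: every hyperlinear approximation is close to a
partial homomorphism. -/
def WeaklyLocallyHSStable (Γ : Type*) [Group Γ] : Prop :=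
  ∀ (k : ℕ → ℕ) (φ : ∀ n, Γ → UGp (k n)), IsHyperlinearApprox k φ →
    ∃ ψ : ∀ n, Γ → UGp (k n), IsPartialHom ψ ∧ CloseU k φ ψ

/-- A group is amenable if it admits a left-invariant mean, here formulated as a
left-invariant finitely additive probability measure defined on all subsets
(equivalently, a left-invariant mean on `ℓ^∞(Γ)`). -/
def IsAmenable (Γ : Type*) [Group Γ] : Prop :=
  ∃ m : Set Γ → ℝ,
    (∀ A : Set Γ, 0 ≤ m A) ∧ m Set.univ = 1 ∧
    (∀ A B : Set Γ, Disjoint A B → m (A ∪ B) = m A + m B) ∧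
    (∀ (g : Γ) (A : Set Γ), m ((g * ·) '' A) = m A)

/-- A character of `Γ`: a positive definite, conjugation-invariant function with
`χ(e) = 1`. -/
def IsCharacter {Γ : Type*} [Group Γ] (χ : Γ → ℂ) : Prop :=
  (∀ (m : ℕ) (g : Fin m → Γ), (Matrix.of fun i j => χ ((g i)⁻¹ * g j)).PosSemidef) ∧
    (∀ g h : Γ, χ (g * h) = χ (h * g)) ∧ χ 1 = 1

/-- An extremal character: one that cannot be written as a nontrivial convex
combination of characters. -/
def IsExtremalCharacter {Γ : Type*} [Group Γ] (χ : Γ → ℂ) : Prop :=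
  IsCharacter χ ∧
    ∀ (t : ℝ) (χ₁ χ₂ : Γ → ℂ), 0 < t → t < 1 → IsCharacter χ₁ → IsCharacter χ₂ →
      (∀ g : Γ, χ g = (t : ℂ) * χ₁ g + (1 - (t : ℂ)) * χ₂ g) → χ₁ = χ ∧ χ₂ = χ

/-- An approximate homomorphism into the symmetric groups `Sym(k_n)` with the
normalized Hamming distance. -/
def IsApproxHomP {Γ : Type*} [Group Γ] (k : ℕ → ℕ)
    (φ : ∀ n, Γ → Equiv.Perm (Fin (k n))) : Prop :=
  ∀ g h : Γ,
    Tendsto (fun n => hammDist (k n) (φ n (g * h)) (φ n g * φ n h)) atTop (nhds 0)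

/-- A group is locally P-stable if every approximate homomorphism into symmetric
groups (with normalized Hamming distance) is close to a partial homomorphism. -/
def LocallyPStable (Γ : Type*) [Group Γ] : Prop :=
  ∀ (k : ℕ → ℕ) (φ : ∀ n, Γ → Equiv.Perm (Fin (k n))), IsApproxHomP k φ →
    ∃ ψ : ∀ n, Γ → Equiv.Perm (Fin (k n)), IsPartialHom ψ ∧
      ∀ g : Γ, Tendsto (fun n => hammDist (k n) (φ n g) (ψ n g)) atTop (nhds 0)

/-- A group is finitely presented if it is the quotient of a finitely generated
free group by the normal closure of finitely many relators. -/
def IsFinitelyPresented (Γ : Type*) [Group Γ] : Prop :=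
  ∃ (n : ℕ) (π : FreeGroup (Fin n) →* Γ) (R : Finset (FreeGroup (Fin n))),
    Function.Surjective π ∧ π.ker = Subgroup.normalClosure (R : Set (FreeGroup (Fin n)))


/-- A sequence of metric groups has bi-invariant metrics if each distance is both
left- and right-invariant. -/
def BiInvariantMetrics (G : ℕ → Type*) [∀ n, Group (G n)] [∀ n, MetricSpace (G n)] : Prop :=
  ∀ (n : ℕ) (g x y : G n), dist (g * x) (g * y) = dist x y ∧ dist (x * g) (y * g) = dist x y

/-- An approximate homomorphism into a sequence of metric groups:
`d(φ_n(gh), φ_n(g)φ_n(h)) → 0` for all `g, h ∈ Γ`. -/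
def IsApproxHomG {Γ : Type*} [Group Γ] (G : ℕ → Type*) [∀ n, Group (G n)]
    [∀ n, MetricSpace (G n)] (k : ℕ → ℕ) (φ : ∀ n, Γ → G (k n)) : Prop :=
  ∀ g h : Γ, Filter.Tendsto (fun n => dist (φ n (g * h)) (φ n g * φ n h)) Filter.atTop (nhds 0)

/-- Two sequences of maps into a sequence of metric groups are close if the
distances at every group element tend to `0`. -/
def CloseG {Γ : Type*} [Group Γ] (G : ℕ → Type*) [∀ n, Group (G n)]
    [∀ n, MetricSpace (G n)] (k : ℕ → ℕ) (φ ψ : ∀ n, Γ → G (k n)) : Prop :=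
  ∀ g : Γ, Filter.Tendsto (fun n => dist (φ n g) (ψ n g)) Filter.atTop (nhds 0)

/-- `Γ` is `G`-stable: every approximate homomorphism is close to a sequence
of genuine homomorphisms. -/
def IsGStable (G : ℕ → Type*) [∀ n, Group (G n)] [∀ n, MetricSpace (G n)]
    (Γ : Type*) [Group Γ] : Prop :=
  ∀ (k : ℕ → ℕ) (φ : ∀ n, Γ → G (k n)), IsApproxHomG G k φ →
    ∃ ψ : ∀ n, Γ →* G (k n), CloseG G k φ (fun n g => ψ n g)

/-- `Γ` is locally `G`-stable: every approximate homomorphism is close to a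
partial homomorphism. -/
def IsLocallyGStable (G : ℕ → Type*) [∀ n, Group (G n)] [∀ n, MetricSpace (G n)]
    (Γ : Type*) [Group Γ] : Prop :=
  ∀ (k : ℕ → ℕ) (φ : ∀ n, Γ → G (k n)), IsApproxHomG G k φ →
    ∃ ψ : ∀ n, Γ → G (k n), IsPartialHom ψ ∧ CloseG G k φ ψ

namespace IsPartialHom

variable {Γ : Type*} [Group Γ] {H : ℕ → Type*} [∀ n, Group (H n)] {ψ : ∀ n, Γ → H n}

lemma eventually_map_mul (hψ : IsPartialHom ψ) (g h : Γ) :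
    ∀ᶠ n in atTop, ψ n (g * h) = ψ n g * ψ n h :=
  eventually_atTop.2 (hψ g h)

lemma eventually_map_one (hψ : IsPartialHom ψ) : ∀ᶠ n in atTop, ψ n 1 = 1 := by
  filter_upwards [hψ.eventually_map_mul 1 1] with n hn
  rw [one_mul] at hn
  exact left_eq_mul.mp hn

lemma eventually_map_inv (hψ : IsPartialHom ψ) (g : Γ) :
    ∀ᶠ n in atTop, ψ n g⁻¹ = (ψ n g)⁻¹ := by
  filter_upwards [hψ.eventually_map_mul g g⁻¹, hψ.eventually_map_one] with n hmul hone
  rw [mul_inv_cancel, hone] at hmul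
  exact eq_inv_of_mul_eq_one_right hmul.symm

/-- Each fixed word is evaluated correctly by the lifted maps for all large `n`, since only
finitely many instances of multiplicativity enter its evaluation. -/
lemma eventually_lift_eq {α : Type*} (hψ : IsPartialHom ψ) (π : FreeGroup α →* Γ)
    (w : FreeGroup α) :
    ∀ᶠ n in atTop, FreeGroup.lift (fun a => ψ n (π (.of a))) w = ψ n (π w) := by
  induction w using FreeGroup.induction_on with
  | C1 =>
    filter_upwards [hψ.eventually_map_one] with n hn
    rw [map_one, map_one, hn]
  | of a =>
    exact Eventually.of_forall fun n => FreeGroup.lift_apply_of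
  | inv_of a _ =>
    filter_upwards [hψ.eventually_map_inv (π (.of a))] with n hn
    rw [map_inv, map_inv, hn, FreeGroup.lift_apply_of]
  | mul v w hv hw =>
    filter_upwards [hv, hw, hψ.eventually_map_mul (π v) (π w)] with n hv hw hvw
    rw [map_mul, map_mul, hv, hw, hvw]

/-- Only finitely many relators have to hold, so for large `n` the lifted maps factor
through the presentation. -/
theorem exists_monoidHom_eventually_eq (hψ : IsPartialHom ψ) (hΓ : IsFinitelyPresented Γ) :
    ∃ ρ : ∀ n, Γ →* H n, ∀ g, ∀ᶠ n in atTop, ρ n g = ψ n g := by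
  obtain ⟨m, π, R, hπ, hker⟩ := hΓ
  set χ : ∀ n, FreeGroup (Fin m) →* H n := fun n => FreeGroup.lift fun a => ψ n (π (.of a))
  have hfactor : ∀ n, ∃ ρ : Γ →* H n, (∀ r ∈ R, χ n r = 1) → ρ.comp π = χ n := by
    intro n
    by_cases hR : ∀ r ∈ R, χ n r = 1
    · have hle : π.ker ≤ (χ n).ker := hker ▸ Subgroup.normalClosure_le_normal hR
      exact ⟨π.liftOfSurjective hπ ⟨χ n, hle⟩, fun _ => π.liftOfRightInverse_comp _ _ _⟩
    · exact ⟨1, fun h => absurd h hR⟩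
  choose ρ hρ using hfactor
  have hrel : ∀ᶠ n in atTop, ∀ r ∈ R, χ n r = 1 := by
    rw [eventually_all_finset]
    intro r hr
    have hπr : r ∈ π.ker := hker ▸ Subgroup.subset_normalClosure hr
    filter_upwards [hψ.eventually_lift_eq π r, hψ.eventually_map_one] with n hlift hone
    rw [hlift, MonoidHom.mem_ker.mp hπr, hone]
  refine ⟨ρ, fun g => ?_⟩
  obtain ⟨w, rfl⟩ := hπ g
  filter_upwards [hrel, hψ.eventually_lift_eq π w] with n hR hlift
  rw [← MonoidHom.comp_apply, hρ n hR, hlift]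

end IsPartialHom

lemma isPartialHom_monoidHom {Γ : Type*} [Group Γ] {H : ℕ → Type*} [∀ n, Group (H n)]
    (ρ : ∀ n, Γ →* H n) : IsPartialHom fun n => ⇑(ρ n) :=
  fun g h => ⟨0, fun n _ => map_mul (ρ n) g h⟩

theorem locallyGStable_iff_gStable_of_finitelyPresented_general {Γ : Type*} [Group Γ]
    (hΓ : IsFinitelyPresented Γ)
    (G : ℕ → Type*) [∀ n, Group (G n)] [∀ n, MetricSpace (G n)] :
    IsLocallyGStable G Γ ↔ IsGStable G Γ := by
  constructor
  · intro hloc k φ hφ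
    obtain ⟨ψ, hψ, hclose⟩ := hloc k φ hφ
    obtain ⟨ρ, hρ⟩ := hψ.exists_monoidHom_eventually_eq hΓ
    refine ⟨ρ, fun g => (hclose g).congr' ?_⟩
    exact (hρ g).mono fun n hn => congrArg (dist (φ n g)) hn.symm
  · intro hst k φ hφ
    obtain ⟨ρ, hclose⟩ := hst k φ hφ
    exact ⟨_, isPartialHom_monoidHom ρ, hclose⟩

/-- A finitely presented group is locally `G`-stable iff it is `G`-stable. -/
theorem locallyGStable_iff_gStable_of_finitelyPresented {Γ : Type*} [Group Γ]
    (hΓ : IsFinitelyPresented Γ)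
    (G : ℕ → Type*) [∀ n, Group (G n)] [∀ n, MetricSpace (G n)]
    (hbi : BiInvariantMetrics G) :
    IsLocallyGStable G Γ ↔ IsGStable G Γ :=
  locallyGStable_iff_gStable_of_finitelyPresented_general hΓ G

end
end

section
/- Let (k_n) be a strictly increasing sequence of positive integers and let Γ be a countable group. If Γ is MAP, then there exists a sequence of genuine homomorphisms φ_n : Γ → U(k_n) that forms a hyperlinear approximation of Γ. If Γ is LEF, then there exists a partial homomorphism φ_n : Γ → U(k_n) that forms a hyperlinear approximation of Γ. -/
open Filter Matrix
open scoped ComplexOrder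

noncomputable section

/-!
For unitary `A ∈ U(k)` one has `‖A - 1‖₂² = 2 - 2 Re τ_k(A)`, so it suffices to make the
normalized traces of `φ_n(g)`, `g ≠ e`, tend to `0`. Embedding `U(d) → U(k)` by
`A ↦ diag(A, …, A, 1)` with `⌊k/d⌋` copies of `A` is a homomorphism which moves `|τ|` by at
most `d/k`. Hence from (partial) homomorphisms `ρ_m : Γ → U(D_m)` with `τ(ρ_m(g)) → 0` we get the
required `φ_n` by using `ρ_{s(n)}` in dimension `k_n`, where `s(n) → ∞` so slowly that
`s(n) · D_{s(n)} ≤ k_n`.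

If `Γ` is MAP and `π(g) ≠ 1`, then `|τ((π ⊕ 1)(g))| < 1`. As `τ` is multiplicative on tensor
products and `|τ| ≤ 1`, the `m`-th tensor power of the tensor product of such representations
for the first `m` elements of `Γ` has `|τ| ≤ c^m` at each of them, where `c < 1` depends only on
the element. If `Γ` is LEF, a
map to a finite group `F` that is injective and multiplicative on a finite set, followed by the
regular representation of `F`, has trace `0` at every nontrivial element of that set.
-/

open scoped Kronecker Topology

namespace Matrix

variable {α m n κ : Type*} [Fintype m] [DecidableEq m] [Fintype n] [DecidableEq n]
  [Fintype κ] [DecidableEq κ]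

section Semiring

variable [Semiring α] [StarRing α]

def reindexStarMonoidHom (e : m ≃ n) : Matrix m m α →⋆* Matrix n n α where
  toFun A := A.submatrix e.symm e.symm
  map_one' := submatrix_one_equiv e.symm
  map_mul' A B := (submatrix_mul_equiv A B _ e.symm _).symm
  map_star' A := (conjTranspose_submatrix A _ _).symm

lemma trace_reindexStarMonoidHom (e : m ≃ n) (A : Matrix m m α) :
    trace (reindexStarMonoidHom e A) = trace A :=
  e.symm.sum_comp fun i => A i i

variable (κ) in
def fromBlocksOneStarMonoidHom : Matrix m m α →⋆* Matrix (m ⊕ κ) (m ⊕ κ) α where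
  toFun A := fromBlocks A 0 0 1
  map_one' := fromBlocks_one
  map_mul' A B := by simp [fromBlocks_multiply]
  map_star' A := by simp [star_eq_conjTranspose, fromBlocks_conjTranspose]

lemma trace_fromBlocksOneStarMonoidHom (A : Matrix m m α) :
    trace (fromBlocksOneStarMonoidHom κ A) = trace A + Fintype.card κ := by
  simp [fromBlocksOneStarMonoidHom, trace, Fintype.sum_sum_type]

end Semiring

section CommSemiring

variable [CommSemiring α] [StarRing α]

variable (κ) in
def kroneckerOneStarMonoidHom : Matrix m m α →⋆* Matrix (m × κ) (m × κ) α where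
  toFun A := A ⊗ₖ (1 : Matrix κ κ α)
  map_one' := one_kronecker_one
  map_mul' A B := by simp [← mul_kronecker_mul]
  map_star' A := by simp [star_eq_conjTranspose, conjTranspose_kronecker]

lemma trace_kroneckerOneStarMonoidHom (A : Matrix m m α) :
    trace (kroneckerOneStarMonoidHom κ A) = trace A * Fintype.card κ := by
  simp [kroneckerOneStarMonoidHom, trace_kronecker]

end CommSemiring

section CommRing

variable [CommRing α] [StarRing α]

def kroneckerUnitaryHom {G : Type*} [Monoid G] (ρ : G →* unitaryGroup m α)
    (σ : G →* unitaryGroup n α) : G →* unitaryGroup (m × n) α where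
  toFun g := ⟨ρ g ⊗ₖ σ g, kronecker_mem_unitary (ρ g).2 (σ g).2⟩
  map_one' := Subtype.ext <| by simp
  map_mul' g h := Subtype.ext <| by simp [mul_kronecker_mul]

lemma permMatrix_mem_unitaryGroup (σ : Equiv.Perm m) : σ.permMatrix α ∈ unitaryGroup m α := by
  rw [mem_unitaryGroup_iff, star_eq_conjTranspose, conjTranspose_permMatrix, ← permMatrix_mul,
    inv_mul_cancel, permMatrix_one]

end CommRing

section Complex

lemma norm_trace_le_card {A : Matrix m m ℂ} (hA : A ∈ unitaryGroup m ℂ) :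
    ‖trace A‖ ≤ Fintype.card m :=
  calc ‖trace A‖ ≤ ∑ i, ‖A i i‖ := norm_sum_le _ _
    _ ≤ ∑ _i : m, (1 : ℝ) := Finset.sum_le_sum fun i _ => entry_norm_bound_of_unitary hA i i
    _ = Fintype.card m := by simp

lemma trace_conjTranspose_sub_one_mul_sub_one {A : Matrix m m ℂ} (hA : A ∈ unitaryGroup m ℂ) :
    trace ((A - 1)ᴴ * (A - 1)) = ((2 * (Fintype.card m - (trace A).re) : ℝ) : ℂ) := by
  have hAA : Aᴴ * A = 1 := mem_unitaryGroup_iff'.mp hA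
  have : (A - 1)ᴴ * (A - 1) = 1 + 1 - (A + Aᴴ) := by
    rw [conjTranspose_sub, conjTranspose_one, sub_mul, mul_sub, mul_sub, hAA, mul_one, one_mul,
      mul_one]
    abel
  rw [this, trace_sub, trace_add, trace_add, trace_conjTranspose, trace_one, Complex.star_def,
    Complex.add_conj]
  push_cast
  ring

lemma re_trace_lt_card {A : Matrix m m ℂ} (hA : A ∈ unitaryGroup m ℂ) (h : A ≠ 1) :
    (trace A).re < Fintype.card m := by
  have hpos : 0 < trace ((A - 1)ᴴ * (A - 1)) :=
    (posSemidef_conjTranspose_mul_self _).trace_nonneg.lt_of_ne'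
      (trace_conjTranspose_mul_self_eq_zero_iff.not.mpr (sub_ne_zero.mpr h))
  rw [trace_conjTranspose_sub_one_mul_sub_one hA] at hpos
  have := Complex.zero_lt_real.mp hpos
  linarith

end Complex

end Matrix

lemma Finset.prod_le_of_mem_of_le_one {ι : Type*} {s : Finset ι} {f : ι → ℝ}
    (h0 : ∀ i ∈ s, 0 ≤ f i) (h1 : ∀ i ∈ s, f i ≤ 1) {j : ι} (hj : j ∈ s) :
    ∏ i ∈ s, f i ≤ f j := by
  classical
  rw [← Finset.mul_prod_erase s f hj]
  exact mul_le_of_le_one_right (h0 j hj) (Finset.prod_le_one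
    (fun i hi => h0 i (Finset.mem_of_mem_erase hi)) fun i hi => h1 i (Finset.mem_of_mem_erase hi))

lemma Complex.norm_add_one_lt {z : ℂ} {r : ℝ} (hz : ‖z‖ ≤ r) (hre : z.re < r) :
    ‖z + 1‖ < r + 1 := by
  have hr : 0 ≤ r := (norm_nonneg z).trans hz
  have hsq : ‖z + 1‖ ^ 2 = ‖z‖ ^ 2 + 2 * z.re + 1 := by
    simp only [Complex.sq_norm, Complex.normSq_apply, Complex.add_re, Complex.add_im,
      Complex.one_re, Complex.one_im]
    ring
  refine (pow_lt_pow_iff_left₀ (norm_nonneg _) (by positivity) two_ne_zero).mp ?_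
  nlinarith [norm_nonneg z]

lemma Nat.cast_div_le_one_div_of_mul_le {s d k : ℕ} (hs : 1 ≤ s) (h : s * d ≤ k) :
    (d : ℝ) / k ≤ 1 / s := by
  rcases Nat.eq_zero_or_pos d with rfl | hd
  · simp
  have hk : 0 < k := lt_of_lt_of_le (Nat.mul_pos hs hd) h
  rw [div_le_div_iff₀ (by positivity) (by positivity), one_mul, mul_comm]
  exact_mod_cast h

section BlockEmbed

variable (d k : ℕ)

def blockEquiv : (Fin d × Fin (k / d)) ⊕ Fin (k % d) ≃ Fin k :=
  (finProdFinEquiv.sumCongr (Equiv.refl _)).trans finSumFinEquiv |>.trans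
    (finCongr (Nat.div_add_mod k d))

def blockEmbed : UGp d →* UGp k :=
  (Unitary.map ((reindexStarMonoidHom (blockEquiv d k)).comp
    ((fromBlocksOneStarMonoidHom _).comp (kroneckerOneStarMonoidHom _)))).toMonoidHom

variable {d k}

lemma trace_blockEmbed (A : UGp d) :
    trace (blockEmbed d k A).val = trace A.val * (k / d : ℕ) + (k % d : ℕ) := by
  simp [blockEmbed, trace_reindexStarMonoidHom, trace_fromBlocksOneStarMonoidHom,
    trace_kroneckerOneStarMonoidHom]

lemma norm_nTrace_blockEmbed_le (hd : 0 < d) (A : UGp d) :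
    ‖nTrace k (blockEmbed d k A)‖ ≤ ‖nTrace d A‖ + d / k := by
  rcases Nat.eq_zero_or_pos k with rfl | hk
  · simp only [nTrace, Nat.cast_zero, div_zero, norm_zero]
    positivity
  have hr : ((k % d : ℕ) : ℝ) ≤ d := by exact_mod_cast (Nat.mod_lt k hd).le
  calc ‖nTrace k (blockEmbed d k A)‖
      ≤ (‖trace A.val‖ * (k / d : ℕ) + (k % d : ℕ)) / k := by
        rw [nTrace, norm_div, Complex.norm_natCast, trace_blockEmbed]
        gcongr
        simpa using norm_add_le (trace A.val * (k / d : ℕ)) (k % d : ℕ)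
    _ ≤ (‖trace A.val‖ * (k / d) + d) / k := by gcongr; exact Nat.cast_div_le
    _ = ‖nTrace d A‖ + d / k := by
        rw [nTrace, norm_div, Complex.norm_natCast]
        field_simp

end BlockEmbed

lemma hsDist_self (k : ℕ) (A : Matrix (Fin k) (Fin k) ℂ) : hsDist k A A = 0 := by
  simp [hsDist]

lemma hsDist_one_eq {k : ℕ} (hk : 0 < k) (A : UGp k) :
    hsDist k A 1 = √(2 - 2 * (nTrace k A).re) := by

  rw [hsDist, trace_conjTranspose_sub_one_mul_sub_one A.2, Complex.ofReal_re, nTrace,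
    Complex.div_natCast_re, Fintype.card_fin]
  congr 1
  field_simp

lemma tendsto_hsDist_one {k : ℕ → ℕ} (hk : Tendsto k atTop atTop) {A : ∀ n, UGp (k n)}
    (hA : Tendsto (fun n => ‖nTrace (k n) (A n)‖) atTop (𝓝 0)) :
    Tendsto (fun n => hsDist (k n) (A n) 1) atTop (𝓝 √2) := by
  have hre : Tendsto (fun n => (nTrace (k n) (A n)).re) atTop (𝓝 0) :=
    squeeze_zero_norm (fun n => Complex.abs_re_le_norm _) hA
  have hlim : Tendsto (fun n => √(2 - 2 * (nTrace (k n) (A n)).re)) atTop (𝓝 √2) := by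
    simpa using ((tendsto_const_nhds.sub (hre.const_mul 2)).sqrt : Tendsto _ _ (𝓝 √(2 - 2 * 0)))
  refine hlim.congr' ?_
  filter_upwards [hk.eventually_gt_atTop 0] with n hn
  exact (hsDist_one_eq hn (A n)).symm

section PartialHom

variable {Γ : Type*} [Group Γ]

lemma IsPartialHom.isApproxHomU {k : ℕ → ℕ} {φ : ∀ n, Γ → UGp (k n)} (hφ : IsPartialHom φ) :
    IsApproxHomU k φ := fun g h => by
  obtain ⟨N, hN⟩ := hφ g h
  refine tendsto_const_nhds.congr' ?_
  filter_upwards [eventually_ge_atTop N] with n hn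
  rw [hN n hn]
  exact (hsDist_self _ _).symm

lemma IsPartialHom.comp {G H : ℕ → Type*} [∀ n, Group (G n)] [∀ n, Group (H n)]
    {ρ : ∀ n, Γ → G n} (hρ : IsPartialHom ρ) {s : ℕ → ℕ} (hs : Tendsto s atTop atTop)
    (E : ∀ n, G (s n) →* H n) : IsPartialHom fun n g => E n (ρ (s n) g) := fun g h => by
  obtain ⟨N, hN⟩ := hρ g h
  obtain ⟨M, hM⟩ := eventually_atTop.mp (hs.eventually_ge_atTop N)
  exact ⟨M, fun n hn => by simp only [hN _ (hM n hn), map_mul]⟩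

end PartialHom

section FittingIndex

variable (D k : ℕ → ℕ)

def fittingIndex (n : ℕ) : ℕ :=
  Nat.findGreatest (fun m => m * D m ≤ k n) n

lemma fittingIndex_mul_le (n : ℕ) : fittingIndex D k n * D (fittingIndex D k n) ≤ k n :=
  Nat.findGreatest_spec (P := fun m => m * D m ≤ k n) (Nat.zero_le n) (by simp)

variable {D k}

lemma tendsto_fittingIndex (hk : StrictMono k) : Tendsto (fittingIndex D k) atTop atTop := by
  refine tendsto_atTop.mpr fun b => ?_
  filter_upwards [eventually_ge_atTop (max b (b * D b))] with n hn
  exact Nat.le_findGreatest (le_of_max_le_left hn) ((le_of_max_le_right hn).trans hk.le_apply)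

end FittingIndex

theorem isHyperlinearApprox_blockEmbed {Γ : Type*} [Group Γ] {D k : ℕ → ℕ} (hk : StrictMono k)
    (hD : ∀ m, 0 < D m) {ρ : ∀ m, Γ → UGp (D m)} (hρ : IsPartialHom ρ)
    (htr : ∀ g, g ≠ 1 → Tendsto (fun m => ‖nTrace (D m) (ρ m g)‖) atTop (𝓝 0)) :
    IsPartialHom (fun n g => blockEmbed _ (k n) (ρ (fittingIndex D k n) g)) ∧
      IsHyperlinearApprox k (fun n g => blockEmbed _ (k n) (ρ (fittingIndex D k n) g)) := by
  set s := fittingIndex D k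
  have hs : Tendsto s atTop atTop := tendsto_fittingIndex hk
  have hφ := hρ.comp hs fun n => blockEmbed (D (s n)) (k n)
  refine ⟨hφ, hφ.isApproxHomU, fun g hg => tendsto_hsDist_one hk.tendsto_atTop ?_⟩
  have hbound : ∀ᶠ n in atTop, ‖nTrace (k n) (blockEmbed _ (k n) (ρ (s n) g))‖ ≤
      ‖nTrace (D (s n)) (ρ (s n) g)‖ + 1 / s n := by
    filter_upwards [hs.eventually_ge_atTop 1] with n hn
    exact (norm_nTrace_blockEmbed_le (hD _) _).trans
      (add_le_add le_rfl (Nat.cast_div_le_one_div_of_mul_le hn (fittingIndex_mul_le D k n)))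
  refine squeeze_zero' (.of_forall fun _ => norm_nonneg _) hbound ?_
  simpa using ((htr g hg).comp hs).add (tendsto_one_div_atTop_nhds_zero_nat.comp hs)

structure UnitaryRep (Γ : Type*) [Group Γ] where
  dim : ℕ
  toHom : Γ →* UGp dim

namespace UnitaryRep

variable {Γ : Type*} [Group Γ]

def character (ρ : UnitaryRep Γ) (g : Γ) : ℂ :=
  nTrace ρ.dim (ρ.toHom g)

protected def trivial : UnitaryRep Γ :=
  ⟨1, 1⟩

def tensor (ρ σ : UnitaryRep Γ) : UnitaryRep Γ :=
  ⟨ρ.dim * σ.dim, (Unitary.map (reindexStarMonoidHom finProdFinEquiv)).toMonoidHom.comp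
    (kroneckerUnitaryHom ρ.toHom σ.toHom)⟩

def addTrivial (ρ : UnitaryRep Γ) : UnitaryRep Γ :=
  ⟨ρ.dim + 1, (Unitary.map ((reindexStarMonoidHom finSumFinEquiv).comp
    (fromBlocksOneStarMonoidHom (Fin 1)))).toMonoidHom.comp ρ.toHom⟩

def tensorRange (R : ℕ → UnitaryRep Γ) : ℕ → UnitaryRep Γ
  | 0 => .trivial
  | m + 1 => (tensorRange R m).tensor (R m)

lemma character_trivial (g : Γ) : (UnitaryRep.trivial : UnitaryRep Γ).character g = 1 := by
  change trace (1 : Matrix (Fin 1) (Fin 1) ℂ) / (1 : ℕ) = 1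
  simp

lemma character_tensor (ρ σ : UnitaryRep Γ) (g : Γ) :
    (ρ.tensor σ).character g = ρ.character g * σ.character g := by
  change trace (reindexStarMonoidHom finProdFinEquiv
      ((ρ.toHom g).val ⊗ₖ (σ.toHom g).val)) / ((ρ.dim * σ.dim : ℕ) : ℂ) = _
  rw [trace_reindexStarMonoidHom, trace_kronecker, Nat.cast_mul, mul_div_mul_comm]
  rfl

lemma character_tensorRange (R : ℕ → UnitaryRep Γ) (m : ℕ) (g : Γ) :
    (tensorRange R m).character g = ∏ i ∈ Finset.range m, (R i).character g := by
  induction m with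
  | zero => exact character_trivial g
  | succ m ih => rw [tensorRange, character_tensor, ih, Finset.prod_range_succ]

lemma dim_tensorRange_pos {R : ℕ → UnitaryRep Γ} (hR : ∀ i, 0 < (R i).dim) (m : ℕ) :
    0 < (tensorRange R m).dim := by
  induction m with
  | zero => exact Nat.one_pos
  | succ m ih => exact Nat.mul_pos ih (hR m)

lemma norm_character_le_one (ρ : UnitaryRep Γ) (g : Γ) : ‖ρ.character g‖ ≤ 1 := by
  rw [character, nTrace, norm_div, Complex.norm_natCast]
  exact div_le_one_of_le₀ (by simpa using norm_trace_le_card (ρ.toHom g).2) (Nat.cast_nonneg _)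

lemma norm_character_addTrivial_lt_one {ρ : UnitaryRep Γ} {g : Γ} (hg : ρ.toHom g ≠ 1) :
    ‖ρ.addTrivial.character g‖ < 1 := by
  have hA := (ρ.toHom g).2
  have hlt := re_trace_lt_card hA (fun h => hg (Subtype.ext h))
  have hle := norm_trace_le_card hA
  rw [Fintype.card_fin] at hlt hle
  have htr : trace (ρ.addTrivial.toHom g).val = trace (ρ.toHom g).val + 1 := by
    change trace (reindexStarMonoidHom finSumFinEquiv
      (fromBlocksOneStarMonoidHom (Fin 1) (ρ.toHom g).val)) = _
    rw [trace_reindexStarMonoidHom, trace_fromBlocksOneStarMonoidHom, Fintype.card_fin,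
      Nat.cast_one]
  rw [character, nTrace, htr, norm_div, Complex.norm_natCast,
    div_lt_one (by exact_mod_cast ρ.dim.succ_pos)]
  exact_mod_cast Complex.norm_add_one_lt hle hlt

theorem exists_seq_tendsto_character_zero [Countable Γ]
    (hsep : ∀ g : Γ, g ≠ 1 → ∃ ρ : UnitaryRep Γ, 0 < ρ.dim ∧ ‖ρ.character g‖ < 1) :
    ∃ R : ℕ → UnitaryRep Γ, (∀ m, 0 < (R m).dim) ∧
      ∀ g : Γ, g ≠ 1 → Tendsto (fun m => ‖(R m).character g‖) atTop (𝓝 0) := by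
  obtain ⟨enum, henum⟩ := exists_surjective_nat Γ
  have hsep' : ∀ g : Γ, ∃ ρ : UnitaryRep Γ, 0 < ρ.dim ∧ (g ≠ 1 → ‖ρ.character g‖ < 1) := by
    intro g
    by_cases hg : g = 1
    · exact ⟨.trivial, Nat.one_pos, fun h => (h hg).elim⟩
    · obtain ⟨ρ, hρ, hlt⟩ := hsep g hg
      exact ⟨ρ, hρ, fun _ => hlt⟩
  choose S hSdim hS using hsep'
  let base (m : ℕ) := tensorRange (fun i => S (enum i)) (m + 1)
  refine ⟨fun m => tensorRange (fun _ => base m) m,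
    fun m => dim_tensorRange_pos (fun _ => dim_tensorRange_pos (fun _ => hSdim _) _) _,
    fun g hg => ?_⟩
  obtain ⟨j, rfl⟩ := henum g
  have hbound : ∀ m ≥ j, ‖(tensorRange (fun _ => base m) m).character (enum j)‖ ≤
      ‖(S (enum j)).character (enum j)‖ ^ m := by
    intro m hm
    rw [character_tensorRange, Finset.prod_const, Finset.card_range, norm_pow,
      character_tensorRange, norm_prod]
    gcongr
    exact Finset.prod_le_of_mem_of_le_one (fun _ _ => norm_nonneg _)
      (fun _ _ => norm_character_le_one _ _) (Finset.mem_range.mpr (Nat.lt_succ_of_le hm))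
  exact squeeze_zero' (.of_forall fun _ => norm_nonneg _) (eventually_atTop.mpr ⟨j, hbound⟩)
    (tendsto_pow_atTop_nhds_zero_of_lt_one (norm_nonneg _) (hS _ hg))

end UnitaryRep

theorem IsMAP.exists_unitaryRep_norm_character_lt_one {Γ : Type*} [Group Γ] (h : IsMAP Γ)
    {g : Γ} (hg : g ≠ 1) : ∃ ρ : UnitaryRep Γ, 0 < ρ.dim ∧ ‖ρ.character g‖ < 1 := by
  obtain ⟨d, π, hπ⟩ := h g hg
  exact ⟨(UnitaryRep.mk d π).addTrivial, d.succ_pos,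
    UnitaryRep.norm_character_addTrivial_lt_one hπ⟩

section Regular

variable (F : Type*) [Group F] [Fintype F] [DecidableEq F]

def regularUnitary : F →* unitaryGroup F ℂ :=
  ((permMatrixHom (R := ℂ)).comp (MulAction.toPermHom F F)).codRestrict _ fun x =>
    permMatrix_mem_unitaryGroup (MulAction.toPermHom F F x)⁻¹

variable {F}

lemma trace_regularUnitary {x : F} (hx : x ≠ 1) : trace (regularUnitary F x).val = 0 := by
  change trace ((MulAction.toPerm x)⁻¹.permMatrix ℂ) = 0
  have hfix : Function.fixedPoints ⇑((MulAction.toPerm x)⁻¹ : Equiv.Perm F) = ∅ :=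
    Set.eq_empty_of_forall_notMem fun y hy =>
      hx (inv_eq_one.mp (mul_eq_right.mp (show x⁻¹ * y = y from hy)))
  rw [trace_permutation, hfix, Set.ncard_empty, Nat.cast_zero]

end Regular

namespace IsLEF

variable {Γ : Type*} [Group Γ]

theorem exists_unitary_trace_eq_zero (h : IsLEF Γ) (B : Finset Γ) :
    ∃ d, 0 < d ∧ ∃ ρ : Γ → UGp d, (∀ g ∈ B, ∀ g' ∈ B, ρ (g * g') = ρ g * ρ g') ∧
      ∀ g ∈ B, g ≠ 1 → nTrace d (ρ g) = 0 := by
  classical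
  obtain ⟨F, _, _, ψ, hinj, hmul⟩ := h (insert 1 B)
  have := Fintype.ofFinite F
  have h1 := Finset.mem_insert_self (1 : Γ) B
  have hψ1 : ψ 1 = 1 := by simpa using hmul 1 h1 1 h1
  let E : F →* UGp (Fintype.card F) :=
    (Unitary.map (reindexStarMonoidHom (Fintype.equivFin F))).toMonoidHom.comp (regularUnitary F)
  refine ⟨Fintype.card F, Fintype.card_pos, fun g => E (ψ g), fun g hg g' hg' => ?_,
    fun g hg hg1 => ?_⟩
  · simp only [hmul g (Finset.mem_insert_of_mem hg) g' (Finset.mem_insert_of_mem hg'), map_mul]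
  · have hψg : ψ g ≠ 1 := fun he =>
      hg1 (hinj (Finset.mem_insert_of_mem hg) h1 (he.trans hψ1.symm))
    change trace (reindexStarMonoidHom (Fintype.equivFin F) (regularUnitary F (ψ g)).val) / _ = 0
    rw [trace_reindexStarMonoidHom, trace_regularUnitary hψg, zero_div]

theorem exists_partialHom_tendsto_nTrace_zero [Countable Γ] (h : IsLEF Γ) :
    ∃ (D : ℕ → ℕ) (ρ : ∀ m, Γ → UGp (D m)), (∀ m, 0 < D m) ∧ IsPartialHom ρ ∧
      ∀ g : Γ, g ≠ 1 → Tendsto (fun m => ‖nTrace (D m) (ρ m g)‖) atTop (𝓝 0) := by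
  classical
  obtain ⟨enum, henum⟩ := exists_surjective_nat Γ
  choose D hD ρ hmul htr using fun m => h.exists_unitary_trace_eq_zero
    ((Finset.range (m + 1)).image enum)
  have hmem {j m : ℕ} (hjm : j ≤ m) : enum j ∈ (Finset.range (m + 1)).image enum :=
    Finset.mem_image_of_mem _ (Finset.mem_range.mpr (Nat.lt_succ_of_le hjm))
  refine ⟨D, ρ, hD, fun g g' => ?_, fun g hg => ?_⟩
  · obtain ⟨i, rfl⟩ := henum g
    obtain ⟨j, rfl⟩ := henum g'
    exact ⟨max i j, fun m hm =>
      hmul m _ (hmem (le_of_max_le_left hm)) _ (hmem (le_of_max_le_right hm))⟩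
  · obtain ⟨j, rfl⟩ := henum g
    refine tendsto_const_nhds.congr' ?_
    filter_upwards [eventually_ge_atTop j] with m hm
    rw [htr m _ (hmem hm) hg, norm_zero]

end IsLEF

theorem hyperlinearApprox_of_map_and_lef_general (Γ : Type*) [Group Γ] [Countable Γ]
    (k : ℕ → ℕ) (hk : StrictMono k) :
    (IsMAP Γ → ∃ φ : ∀ n, Γ →* UGp (k n), IsHyperlinearApprox k (fun n g => φ n g)) ∧
    (IsLEF Γ → ∃ φ : ∀ n, Γ → UGp (k n), IsPartialHom φ ∧ IsHyperlinearApprox k φ) := by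
  refine ⟨fun hMAP => ?_, fun hLEF => ?_⟩
  · obtain ⟨R, hdim, hR⟩ := UnitaryRep.exists_seq_tendsto_character_zero fun _ hg =>
      hMAP.exists_unitaryRep_norm_character_lt_one hg
    have hρ : IsPartialHom fun m (g : Γ) => (R m).toHom g := fun g g' =>
      ⟨0, fun m _ => map_mul _ g g'⟩
    exact ⟨fun n => (blockEmbed _ (k n)).comp (R (fittingIndex (fun m => (R m).dim) k n)).toHom,
      (isHyperlinearApprox_blockEmbed hk hdim hρ hR).2⟩
  · obtain ⟨D, ρ, hD, hρ, htr⟩ := hLEF.exists_partialHom_tendsto_nTrace_zero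
    exact ⟨_, isHyperlinearApprox_blockEmbed hk hD hρ htr⟩

/-- For any strictly increasing sequence of positive integers `k_n`: a MAP group
admits a sequence of genuine homomorphisms `Γ → U(k_n)` forming a hyperlinear
approximation, and a LEF group admits a partial homomorphism `Γ → U(k_n)` forming
a hyperlinear approximation. -/
theorem hyperlinearApprox_of_map_and_lef (Γ : Type*) [Group Γ] [Countable Γ]
    (k : ℕ → ℕ) (hk : StrictMono k) (hkpos : ∀ n, 0 < k n) :
    (IsMAP Γ → ∃ φ : ∀ n, Γ →* UGp (k n), IsHyperlinearApprox k (fun n g => φ n g)) ∧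
    (IsLEF Γ → ∃ φ : ∀ n, Γ → UGp (k n), IsPartialHom φ ∧ IsHyperlinearApprox k φ) :=
  hyperlinearApprox_of_map_and_lef_general Γ k hk
end
end
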